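/- arXiv:2512.24567 — 3 statements merged into one kernel-verified Lean document; each statement's English description precedes it below -/
import Mathlib

section
/- Let μ and ν be Borel probability measures on ℝ with finite second moments, with cumulative distribution functions F_μ and F_ν and quantile (inverse CDF) functions F_μ⁻¹, F_ν⁻¹. Then the squared 2-Wasserstein distance satisfies W₂²(μ,ν) = ∫₀¹ |F_μ⁻¹(p) − F_ν⁻¹(p)|² dp. -/
/-!
With `h = 1[x ≤ ·] - 1[y ≤ ·]` one has `(x - y)² = ∫∫ h(s) h(t) ds dt`. Integrating this
against a coupling `γ` of `μ` and `ν` (Hoeffding's identity) gives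
`cost γ = ∫∫ F_μ(s ⊓ t) + F_ν(s ⊓ t) - C_γ(s, t) - C_γ(t, s) ds dt`,
where `C_γ` is the joint CDF of `γ`. The marginals fix the first two terms, and
`C_γ(s, t) ≤ min (F_μ s) (F_ν t)` (Fréchet), with equality for the comonotone coupling, the law
of `p ↦ (F_μ⁻¹ p, F_ν⁻¹ p)` under Lebesgue measure on `(0, 1)`. So the comonotone coupling is
optimal, and its cost is the quantile integral.
-/

open MeasureTheory Set

/-- The CDF of a measure on ℝ. -/
noncomputable def mcdf (μ : Measure ℝ) (x : ℝ) : ℝ := (μ (Iic x)).toReal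

/-- The quantile (inverse CDF) function of a measure on ℝ. -/
noncomputable def quantile (μ : Measure ℝ) (p : ℝ) : ℝ := sInf {x : ℝ | p ≤ mcdf μ x}

/-- The squared 2-Wasserstein distance between measures on ℝ, via couplings. -/
noncomputable def W2sq (μ ν : Measure ℝ) : ℝ :=
  sInf {c : ℝ | ∃ γ : Measure (ℝ × ℝ), γ.map Prod.fst = μ ∧ γ.map Prod.snd = ν ∧
    c = ∫ p, (p.1 - p.2) ^ 2 ∂γ}

open Filter ProbabilityTheory

lemma volume_Ioo_inter_Iic {m : ℝ} (hm : m ≤ 1) :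
    volume (Ioo 0 1 ∩ Iic m) = ENNReal.ofReal m := by
  refine le_antisymm ?_ ?_
  · calc volume (Ioo 0 1 ∩ Iic m) ≤ volume (Ioc 0 m) :=
          measure_mono fun p hp => ⟨hp.1.1, hp.2⟩
      _ = ENNReal.ofReal m := by simp
  · calc ENNReal.ofReal m = volume (Ioo 0 m) := by simp
      _ ≤ volume (Ioo 0 1 ∩ Iic m) :=
          measure_mono fun p hp => ⟨⟨hp.1, hp.2.trans_le hm⟩, hp.2.le⟩

section Quantile

variable {μ : Measure ℝ} [IsProbabilityMeasure μ]

lemma mcdf_eq_cdf : mcdf μ = cdf μ := funext fun x => (cdf_eq_real μ x).symm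

lemma quantile_le_iff {p x : ℝ} (hp : p ∈ Ioo 0 1) :
    quantile μ p ≤ x ↔ p ≤ cdf μ x := by
  rw [quantile, mcdf_eq_cdf]
  have hne : {y | p ≤ cdf μ y}.Nonempty :=
    ((tendsto_cdf_atTop μ).eventually (eventually_ge_nhds hp.2)).exists
  have hbdd : BddBelow {y | p ≤ cdf μ y} := by
    obtain ⟨b, hb⟩ :=
      ((tendsto_cdf_atBot μ).eventually (eventually_lt_nhds hp.1)).exists_forall_of_atBot
    exact ⟨b, fun y hy => le_of_not_gt fun hyb => (hb y hyb.le).not_ge hy⟩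
  refine ⟨fun h => ?_, fun h => csInf_le hbdd h⟩
  have hright : ∀ y > x, p ≤ cdf μ y := fun y hy => by
    obtain ⟨z, hz, hzy⟩ := exists_lt_of_csInf_lt hne (h.trans_lt hy)
    exact hz.trans (monotone_cdf μ hzy.le)
  refine ge_of_tendsto (((cdf μ).right_continuous x).mono Ioi_subset_Ici_self) ?_
  filter_upwards [self_mem_nhdsWithin] with y hy using hright y hy

lemma monotoneOn_quantile : MonotoneOn (quantile μ) (Ioo 0 1) := fun _ hp _ hq hpq =>
  (quantile_le_iff hp).2 (hpq.trans ((quantile_le_iff hq).1 le_rfl))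

lemma aemeasurable_quantile : AEMeasurable (quantile μ) (volume.restrict (Ioo 0 1)) :=
  aemeasurable_restrict_of_monotoneOn measurableSet_Ioo monotoneOn_quantile

lemma map_quantile : (volume.restrict (Ioo 0 1)).map (quantile μ) = μ := by
  refine Measure.ext_of_Iic _ _ fun x => ?_
  have hpre : quantile μ ⁻¹' Iic x ∩ Ioo 0 1 = Ioo 0 1 ∩ Iic (cdf μ x) := by
    ext p
    simp only [mem_inter_iff, mem_preimage, mem_Iic]
    exact ⟨fun ⟨h, hp⟩ => ⟨hp, (quantile_le_iff hp).1 h⟩,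
      fun ⟨hp, h⟩ => ⟨(quantile_le_iff hp).2 h, hp⟩⟩
  rw [Measure.map_apply_of_aemeasurable aemeasurable_quantile measurableSet_Iic,
    Measure.restrict_apply' measurableSet_Ioo, hpre, volume_Ioo_inter_Iic (cdf_le_one μ x),
    ofReal_cdf]

end Quantile

noncomputable def stepDiff (x y s : ℝ) : ℝ :=
  (if x ≤ s then 1 else 0) - (if y ≤ s then 1 else 0)

lemma stepDiff_eq_indicator {x y : ℝ} (h : x ≤ y) : stepDiff x y = (Ico x y).indicator 1 := by
  ext s
  simp only [stepDiff, indicator_apply, mem_Ico, Pi.one_apply]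
  split_ifs <;> grind

lemma stepDiff_swap (x y : ℝ) : stepDiff x y = -stepDiff y x := by
  ext s
  simp only [stepDiff, Pi.neg_apply]
  ring

lemma abs_stepDiff_le_one (x y s : ℝ) : |stepDiff x y s| ≤ 1 := by
  unfold stepDiff
  split_ifs <;> norm_num

lemma integrable_stepDiff (x y : ℝ) : Integrable (stepDiff x y) := by
  have key : ∀ {a b : ℝ}, a ≤ b → Integrable (stepDiff a b) := fun h => by
    rw [stepDiff_eq_indicator h]
    exact (integrable_indicator_iff measurableSet_Ico).2 (integrableOn_const (by simp))
  rcases le_total x y with h | h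
  · exact key h
  · rw [stepDiff_swap]
    exact (key h).neg

lemma integral_stepDiff (x y : ℝ) : ∫ s, stepDiff x y s = y - x := by
  have key : ∀ {a b : ℝ}, a ≤ b → ∫ s, stepDiff a b s = b - a := fun h => by
    rw [stepDiff_eq_indicator h, integral_indicator_one measurableSet_Ico]
    simp [h]
  rcases le_total x y with h | h
  · exact key h
  · rw [stepDiff_swap, Pi.neg_def, integral_neg, key h]
    ring

lemma stepDiff_mul_stepDiff_nonneg (x y s t : ℝ) : 0 ≤ stepDiff x y s * stepDiff x y t := by
  have key : ∀ {a b : ℝ}, a ≤ b → 0 ≤ stepDiff a b s * stepDiff a b t := fun h => by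
    rw [stepDiff_eq_indicator h]
    exact mul_nonneg (indicator_nonneg (fun _ _ => zero_le_one) _)
      (indicator_nonneg (fun _ _ => zero_le_one) _)
  rcases le_total x y with h | h
  · exact key h
  · rw [stepDiff_swap]
    simpa only [Pi.neg_apply, neg_mul_neg] using key h

lemma sq_sub_eq_integral_stepDiff_mul (x y : ℝ) :
    (x - y) ^ 2 = ∫ w : ℝ × ℝ, stepDiff x y w.1 * stepDiff x y w.2 := by
  rw [Measure.volume_eq_prod, integral_prod_mul, integral_stepDiff]
  ring

lemma measurable_stepDiff_mul : Measurable fun q : (ℝ × ℝ) × (ℝ × ℝ) =>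
    stepDiff q.1.1 q.1.2 q.2.1 * stepDiff q.1.1 q.1.2 q.2.2 := by
  unfold stepDiff
  refine Measurable.mul ?_ ?_ <;> refine Measurable.sub ?_ ?_ <;>
    exact Measurable.ite (measurableSet_le (by fun_prop) (by fun_prop)) measurable_const
      measurable_const

lemma stepDiff_mul_stepDiff (z : ℝ × ℝ) (s t : ℝ) :
    stepDiff z.1 z.2 s * stepDiff z.1 z.2 t =
      (Prod.fst ⁻¹' Iic (min s t)).indicator 1 z + (Prod.snd ⁻¹' Iic (min s t)).indicator 1 z
        - (Iic (s, t)).indicator 1 z - (Iic (t, s)).indicator 1 z := by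
  obtain ⟨x, y⟩ := z
  simp only [stepDiff, indicator_apply, mem_Iic, Prod.mk_le_mk]
  split_ifs <;> simp_all

section Coupling

variable {μ ν : Measure ℝ} {γ : Measure (ℝ × ℝ)}

lemma lintegral_sq_sub_eq [SFinite γ] :
    ∫⁻ z, ENNReal.ofReal ((z.1 - z.2) ^ 2) ∂γ =
      ∫⁻ w : ℝ × ℝ, ∫⁻ z, ENNReal.ofReal (stepDiff z.1 z.2 w.1 * stepDiff z.1 z.2 w.2) ∂γ := by
  rw [← lintegral_lintegral_swap measurable_stepDiff_mul.ennreal_ofReal.aemeasurable]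
  refine lintegral_congr fun z => ?_
  rw [sq_sub_eq_integral_stepDiff_mul, ofReal_integral_eq_lintegral_ofReal]
  · rw [Measure.volume_eq_prod]
    exact (integrable_stepDiff _ _).mul_prod (integrable_stepDiff _ _)
  · exact ae_of_all _ fun w => stepDiff_mul_stepDiff_nonneg _ _ _ _

lemma integrable_stepDiff_mul_stepDiff [IsFiniteMeasure γ] (s t : ℝ) :
    Integrable (fun z : ℝ × ℝ => stepDiff z.1 z.2 s * stepDiff z.1 z.2 t) γ := by
  have hmeas :=
    measurable_stepDiff_mul.comp (measurable_id.prodMk (measurable_const (a := (s, t))))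
  refine .of_bound hmeas.aestronglyMeasurable 1 (ae_of_all _ fun z => ?_)
  rw [Real.norm_eq_abs, abs_mul]
  exact mul_le_one₀ (abs_stepDiff_le_one _ _ _) (abs_nonneg _) (abs_stepDiff_le_one _ _ _)

lemma integral_stepDiff_mul_stepDiff [IsFiniteMeasure γ] (hfst : γ.map Prod.fst = μ)
    (hsnd : γ.map Prod.snd = ν) (s t : ℝ) :
    ∫ z, stepDiff z.1 z.2 s * stepDiff z.1 z.2 t ∂γ =
      μ.real (Iic (min s t)) + ν.real (Iic (min s t)) - γ.real (Iic (s, t)) -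
        γ.real (Iic (t, s)) := by
  have hint : ∀ {A : Set (ℝ × ℝ)}, MeasurableSet A →
      Integrable (A.indicator (1 : ℝ × ℝ → ℝ)) γ :=
    fun hA => (integrable_const (1 : ℝ)).indicator hA
  have m1 : MeasurableSet (Prod.fst ⁻¹' Iic (min s t) : Set (ℝ × ℝ)) :=
    measurable_fst measurableSet_Iic
  have m2 : MeasurableSet (Prod.snd ⁻¹' Iic (min s t) : Set (ℝ × ℝ)) :=
    measurable_snd measurableSet_Iic
  simp_rw [stepDiff_mul_stepDiff]
  rw [integral_sub, integral_sub, integral_add (hint m1) (hint m2)]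
  · simp only [integral_indicator_one m1, integral_indicator_one m2,
      integral_indicator_one measurableSet_Iic]
    rw [← hfst, ← hsnd, map_measureReal_apply measurable_fst measurableSet_Iic,
      map_measureReal_apply measurable_snd measurableSet_Iic]
  · exact (hint m1).add (hint m2)
  · exact hint measurableSet_Iic
  · exact ((hint m1).add (hint m2)).sub (hint measurableSet_Iic)
  · exact hint measurableSet_Iic

lemma measureReal_Iic_le_min [IsFiniteMeasure γ] (hfst : γ.map Prod.fst = μ)
    (hsnd : γ.map Prod.snd = ν) (s t : ℝ) :
    γ.real (Iic (s, t)) ≤ min (μ.real (Iic s)) (ν.real (Iic t)) := by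
  rw [← hfst, ← hsnd, map_measureReal_apply measurable_fst measurableSet_Iic,
    map_measureReal_apply measurable_snd measurableSet_Iic]
  exact le_min (measureReal_mono fun z hz => hz.1) (measureReal_mono fun z hz => hz.2)

lemma isFiniteMeasure_of_map_fst [IsFiniteMeasure μ] (hfst : γ.map Prod.fst = μ) :
    IsFiniteMeasure γ :=
  have : IsFiniteMeasure (γ.map Prod.fst) := hfst ▸ ‹_›
  Measure.isFiniteMeasure_of_map measurable_fst.aemeasurable

lemma integrable_sq_sub (hfst : γ.map Prod.fst = μ) (hsnd : γ.map Prod.snd = ν)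
    (hμ : Integrable (fun x : ℝ => x ^ 2) μ) (hν : Integrable (fun x : ℝ => x ^ 2) ν) :
    Integrable (fun z : ℝ × ℝ => (z.1 - z.2) ^ 2) γ := by
  have h1 := (memLp_two_iff_integrable_sq aestronglyMeasurable_id).2 hμ
  have h2 := (memLp_two_iff_integrable_sq aestronglyMeasurable_id).2 hν
  rw [← hfst, memLp_map_measure_iff aestronglyMeasurable_id measurable_fst.aemeasurable] at h1
  rw [← hsnd, memLp_map_measure_iff aestronglyMeasurable_id measurable_snd.aemeasurable] at h2
  exact (h1.sub h2).integrable_sq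

end Coupling

/-- The comonotone coupling of `μ` and `ν`. -/
noncomputable def quantileCoupling (μ ν : Measure ℝ) : Measure (ℝ × ℝ) :=
  (volume.restrict (Ioo 0 1)).map fun p => (quantile μ p, quantile ν p)

section QuantileCoupling

variable {μ ν : Measure ℝ} [IsProbabilityMeasure μ] [IsProbabilityMeasure ν]

lemma aemeasurable_quantile_prod :
    AEMeasurable (fun p => (quantile μ p, quantile ν p)) (volume.restrict (Ioo 0 1)) :=
  aemeasurable_quantile.prodMk aemeasurable_quantile

lemma quantileCoupling_map_fst : (quantileCoupling μ ν).map Prod.fst = μ := by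
  rw [quantileCoupling, AEMeasurable.map_map_of_aemeasurable measurable_fst.aemeasurable
    aemeasurable_quantile_prod]
  exact map_quantile

lemma quantileCoupling_map_snd : (quantileCoupling μ ν).map Prod.snd = ν := by
  rw [quantileCoupling, AEMeasurable.map_map_of_aemeasurable measurable_snd.aemeasurable
    aemeasurable_quantile_prod]
  exact map_quantile

instance : IsFiniteMeasure (quantileCoupling μ ν) :=
  isFiniteMeasure_of_map_fst quantileCoupling_map_fst

lemma quantileCoupling_real_Iic (s t : ℝ) :
    (quantileCoupling μ ν).real (Iic (s, t)) = min (cdf μ s) (cdf ν t) := by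
  have hpre : (fun p => (quantile μ p, quantile ν p)) ⁻¹' Iic (s, t) ∩ Ioo 0 1 =
      Ioo 0 1 ∩ Iic (min (cdf μ s) (cdf ν t)) := by
    ext p
    simp only [mem_inter_iff, mem_preimage, mem_Iic, Prod.mk_le_mk, le_min_iff]
    constructor
    · rintro ⟨⟨hs, ht⟩, hp⟩
      exact ⟨hp, (quantile_le_iff hp).1 hs, (quantile_le_iff hp).1 ht⟩
    · rintro ⟨hp, hs, ht⟩
      exact ⟨⟨(quantile_le_iff hp).2 hs, (quantile_le_iff hp).2 ht⟩, hp⟩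
  rw [quantileCoupling, map_measureReal_apply_of_aemeasurable aemeasurable_quantile_prod
    measurableSet_Iic, measureReal_def, Measure.restrict_apply' measurableSet_Ioo, hpre,
    volume_Ioo_inter_Iic ((min_le_left _ _).trans (cdf_le_one μ s)),
    ENNReal.toReal_ofReal (le_min (cdf_nonneg μ s) (cdf_nonneg ν t))]

lemma integral_sq_sub_quantileCoupling :
    ∫ z, (z.1 - z.2) ^ 2 ∂(quantileCoupling μ ν) =
      ∫ p in Ioo 0 1, |quantile μ p - quantile ν p| ^ 2 := by
  rw [quantileCoupling, integral_map aemeasurable_quantile_prod (by fun_prop)]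
  simp only [sq_abs]

lemma lintegral_sq_sub_quantileCoupling_le {γ : Measure (ℝ × ℝ)} (hfst : γ.map Prod.fst = μ)
    (hsnd : γ.map Prod.snd = ν) :
    ∫⁻ z, ENNReal.ofReal ((z.1 - z.2) ^ 2) ∂(quantileCoupling μ ν) ≤
      ∫⁻ z, ENNReal.ofReal ((z.1 - z.2) ^ 2) ∂γ := by
  have := isFiniteMeasure_of_map_fst hfst
  rw [lintegral_sq_sub_eq, lintegral_sq_sub_eq]
  refine lintegral_mono fun w => ?_
  rw [← ofReal_integral_eq_lintegral_ofReal (integrable_stepDiff_mul_stepDiff _ _)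
      (ae_of_all _ fun _ => stepDiff_mul_stepDiff_nonneg _ _ _ _),
    ← ofReal_integral_eq_lintegral_ofReal (integrable_stepDiff_mul_stepDiff _ _)
      (ae_of_all _ fun _ => stepDiff_mul_stepDiff_nonneg _ _ _ _),
    integral_stepDiff_mul_stepDiff quantileCoupling_map_fst quantileCoupling_map_snd,
    integral_stepDiff_mul_stepDiff hfst hsnd, quantileCoupling_real_Iic, quantileCoupling_real_Iic]
  have hst := measureReal_Iic_le_min hfst hsnd w.1 w.2
  have hts := measureReal_Iic_le_min hfst hsnd w.2 w.1
  simp only [← cdf_eq_real] at hst hts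
  exact ENNReal.ofReal_le_ofReal (by linarith)

lemma integral_sq_sub_quantileCoupling_le {γ : Measure (ℝ × ℝ)} (hfst : γ.map Prod.fst = μ)
    (hsnd : γ.map Prod.snd = ν) (hμ : Integrable (fun x : ℝ => x ^ 2) μ)
    (hν : Integrable (fun x : ℝ => x ^ 2) ν) :
    ∫ z, (z.1 - z.2) ^ 2 ∂(quantileCoupling μ ν) ≤ ∫ z, (z.1 - z.2) ^ 2 ∂γ := by
  have hsq : ∀ ρ : Measure (ℝ × ℝ), ∫ z, (z.1 - z.2) ^ 2 ∂ρ =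
      (∫⁻ z, ENNReal.ofReal ((z.1 - z.2) ^ 2) ∂ρ).toReal := fun ρ =>
    integral_eq_lintegral_of_nonneg_ae (ae_of_all _ fun _ => sq_nonneg _) (by fun_prop)
  rw [hsq, hsq]
  exact ENNReal.toReal_mono (integrable_sq_sub hfst hsnd hμ hν).lintegral_lt_top.ne
    (lintegral_sq_sub_quantileCoupling_le hfst hsnd)

end QuantileCoupling

/-- In one dimension, the squared 2-Wasserstein distance equals the L² distance between
the quantile functions. -/
theorem stmt_0 (μ ν : Measure ℝ) [IsProbabilityMeasure μ] [IsProbabilityMeasure ν]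
    (hμ : Integrable (fun x : ℝ => x ^ 2) μ) (hν : Integrable (fun x : ℝ => x ^ 2) ν) :
    W2sq μ ν = ∫ p in Ioo (0 : ℝ) 1, |quantile μ p - quantile ν p| ^ 2 := by
  refine IsLeast.csInf_eq ⟨⟨quantileCoupling μ ν, quantileCoupling_map_fst,
    quantileCoupling_map_snd, integral_sq_sub_quantileCoupling.symm⟩, ?_⟩
  rintro c ⟨γ, hfst, hsnd, rfl⟩
  rw [← integral_sq_sub_quantileCoupling]
  exact integral_sq_sub_quantileCoupling_le hfst hsnd hμ hν
end

section
/- Let σ and μ be probability measures on ℝ with σ atomless (e.g., having a density). If T is a nondecreasing map with T_#σ = μ, then T is an optimal transport map for the quadratic cost, i.e., W₂²(σ,μ) = ∫ |x − T(x)|² dσ(x). -/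
/-!
A monotone `T` is the derivative of the convex potential `φ x = ∫₀ˣ T`, so `T w` is a
subgradient of `φ` at `w`. For the Legendre transform `ψ` of `φ`, Young's inequality
`x * y ≤ φ x + ψ y` holds everywhere and is an equality on the graph of `T`. Integrating it
against a coupling `γ` of `σ` and `T_#σ` gives `∫ x y dγ ≤ ∫ x T(x) dσ`, and since
`∫ (x - y)² dγ = ∫ x² dσ + ∫ y² d(T_#σ) - 2 ∫ x y dγ`, the coupling carried by the graph of `T`
has the least cost.
-/

open MeasureTheory Set

noncomputable def potential (T : ℝ → ℝ) (x : ℝ) : ℝ := ∫ u in (0 : ℝ)..x, T u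

namespace Monotone

variable {T : ℝ → ℝ}

theorem continuous_potential (hT : Monotone T) : Continuous (potential T) :=
  intervalIntegral.continuous_primitive (fun _ _ => hT.intervalIntegrable) 0

theorem potential_add_mul_sub_le (hT : Monotone T) (w x : ℝ) :
    potential T w + T w * (x - w) ≤ potential T x := by
  have hsub : potential T x - potential T w = ∫ u in w..x, T u :=
    intervalIntegral.integral_interval_sub_left hT.intervalIntegrable hT.intervalIntegrable
  rcases le_total w x with hwx | hxw
  · have := intervalIntegral.integral_mono_on (μ := volume) hwx intervalIntegrable_const
      hT.intervalIntegrable fun u hu => hT hu.1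
    rw [intervalIntegral.integral_const, smul_eq_mul] at this
    linarith
  · have := intervalIntegral.integral_mono_on (μ := volume) hxw hT.intervalIntegrable
      intervalIntegrable_const fun u hu => hT hu.2
    rw [intervalIntegral.integral_const, smul_eq_mul, intervalIntegral.integral_symm] at this
    linarith

theorem integrable_potential (hT : Monotone T) {σ : Measure ℝ} [IsFiniteMeasure σ]
    (hx : MemLp id 2 σ) (hT2 : MemLp T 2 σ) : Integrable (potential T) σ := by
  have h0 : potential T 0 = 0 := intervalIntegral.integral_same
  refine integrable_of_le_of_le hT.continuous_potential.aestronglyMeasurable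
    (ae_of_all _ fun x => ?_) (ae_of_all _ fun x => ?_)
    ((hx.integrable one_le_two).const_mul (T 0)) (hx.integrable_mul hT2)
  · show T 0 * x ≤ potential T x
    linarith [hT.potential_add_mul_sub_le 0 x]
  · have := hT.potential_add_mul_sub_le x 0
    simp only [Pi.mul_apply, id_eq]
    linarith

end Monotone

-- The supremum runs over `ℚ` so that it is measurable in `y`; for continuous `φ` it equals the
-- supremum over `ℝ` (`coe_le_legendre`).
noncomputable def legendre (φ : ℝ → ℝ) (y : ℝ) : EReal :=
  ⨆ q : ℚ, ((q * y - φ q : ℝ) : EReal)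

section Legendre

variable {φ : ℝ → ℝ}

theorem measurable_legendre (φ : ℝ → ℝ) : Measurable (legendre φ) :=
  Measurable.iSup fun _ => measurable_coe_real_ereal.comp ((measurable_id.const_mul _).sub_const _)

theorem coe_le_legendre (hφ : Continuous φ) (x y : ℝ) :
    ((x * y - φ x : ℝ) : EReal) ≤ legendre φ y :=
  Rat.denseRange_cast.induction_on x
    (isClosed_le (continuous_coe_real_ereal.comp ((continuous_id.mul continuous_const).sub hφ))
      continuous_const)
    fun q => le_iSup (fun q : ℚ => ((q * y - φ q : ℝ) : EReal)) q

theorem legendre_eq_of_forall_le (hφ : Continuous φ) {w s : ℝ}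
    (h : ∀ x, φ w + s * (x - w) ≤ φ x) : legendre φ s = ((w * s - φ w : ℝ) : EReal) :=
  le_antisymm (iSup_le fun q => EReal.coe_le_coe_iff.2 (by linarith [h q]))
    (coe_le_legendre hφ w s)

theorem mul_le_add_toReal_legendre (hφ : Continuous φ) {y : ℝ} (hy : legendre φ y ≠ ⊤) (x : ℝ) :
    x * y ≤ φ x + (legendre φ y).toReal := by
  have := EReal.toReal_le_toReal (coe_le_legendre hφ x y) (EReal.coe_ne_bot _) hy
  rw [EReal.toReal_coe] at this
  linarith

end Legendre

theorem integral_sub_sq {α : Type*} [MeasurableSpace α] {ν : Measure α} {f g : α → ℝ}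
    (hf : MemLp f 2 ν) (hg : MemLp g 2 ν) :
    ∫ a, (f a - g a) ^ 2 ∂ν = ∫ a, f a ^ 2 ∂ν + ∫ a, g a ^ 2 ∂ν - 2 * ∫ a, f a * g a ∂ν := by
  have hf2 := (memLp_two_iff_integrable_sq hf.1).1 hf
  have hg2 := (memLp_two_iff_integrable_sq hg.1).1 hg
  have hsum : Integrable (fun a => f a ^ 2 + g a ^ 2) ν := hf2.add hg2
  have hfg : Integrable (fun a => 2 * (f a * g a)) ν := (hf.integrable_mul hg).const_mul 2
  calc ∫ a, (f a - g a) ^ 2 ∂ν = ∫ a, (f a ^ 2 + g a ^ 2 - 2 * (f a * g a)) ∂ν := by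
        congr 1; ext a; ring
    _ = _ := by rw [integral_sub hsum hfg, integral_add hf2 hg2, integral_const_mul]

theorem integral_sub_sq_of_map_eq {γ : Measure (ℝ × ℝ)} {σ ν : Measure ℝ}
    (h1 : γ.map Prod.fst = σ) (h2 : γ.map Prod.snd = ν) (hx : MemLp id 2 σ) (hy : MemLp id 2 ν) :
    ∫ p, (p.1 - p.2) ^ 2 ∂γ = ∫ x, x ^ 2 ∂σ + ∫ y, y ^ 2 ∂ν - 2 * ∫ p, p.1 * p.2 ∂γ := by
  subst h1 h2
  rw [integral_sub_sq (f := fun p : ℝ × ℝ => p.1) (g := fun p => p.2)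
      (hx.comp_of_map measurable_fst.aemeasurable) (hy.comp_of_map measurable_snd.aemeasurable),
    integral_map measurable_fst.aemeasurable (by fun_prop),
    integral_map measurable_snd.aemeasurable (by fun_prop)]

theorem integral_mul_le_of_ae_le_add {γ : Measure (ℝ × ℝ)} {φ ψ : ℝ → ℝ}
    (hφ : Integrable φ (γ.map Prod.fst)) (hψ : Integrable ψ (γ.map Prod.snd))
    (hxy : Integrable (fun p : ℝ × ℝ => p.1 * p.2) γ)
    (h : ∀ᵐ p ∂γ, p.1 * p.2 ≤ φ p.1 + ψ p.2) :
    ∫ p, p.1 * p.2 ∂γ ≤ ∫ x, φ x ∂(γ.map Prod.fst) + ∫ y, ψ y ∂(γ.map Prod.snd) := by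
  have hφ' : Integrable (fun p : ℝ × ℝ => φ p.1) γ := hφ.comp_measurable measurable_fst
  have hψ' : Integrable (fun p : ℝ × ℝ => ψ p.2) γ := hψ.comp_measurable measurable_snd
  rw [integral_map measurable_fst.aemeasurable hφ.1, integral_map measurable_snd.aemeasurable hψ.1,
    ← integral_add hφ' hψ']
  exact integral_mono_ae hxy (hφ'.add hψ') h

theorem Monotone.integral_fst_mul_snd_le {T : ℝ → ℝ} (hT : Monotone T) {σ : Measure ℝ}
    [IsFiniteMeasure σ] (hx : MemLp id 2 σ) (hy : MemLp id 2 (σ.map T)) {γ : Measure (ℝ × ℝ)}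
    (h1 : γ.map Prod.fst = σ) (h2 : γ.map Prod.snd = σ.map T) :
    ∫ p, p.1 * p.2 ∂γ ≤ ∫ x, x * T x ∂σ := by
  have hT2 : MemLp T 2 σ := hy.comp_of_map hT.measurable.aemeasurable
  set φ := potential T
  set ψ := fun y => (legendre φ y).toReal
  have hφc : Continuous φ := hT.continuous_potential
  have hφ : Integrable φ σ := hT.integrable_potential hx hT2
  have hxT : Integrable (fun x => x * T x) σ := hx.integrable_mul hT2
  have hlegendre (w : ℝ) : legendre φ (T w) = ((w * T w - φ w : ℝ) : EReal) :=
    legendre_eq_of_forall_le hφc (hT.potential_add_mul_sub_le w)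
  have hψT : ψ ∘ T = fun w => w * T w - φ w := funext fun w => by
    simp only [ψ, Function.comp_apply, hlegendre, EReal.toReal_coe]
  have hψ : Integrable ψ (σ.map T) := by
    rw [integrable_map_measure (measurable_legendre φ).ereal_toReal.aestronglyMeasurable
      hT.measurable.aemeasurable, hψT]
    exact hxT.sub hφ
  have hfinite : ∀ᵐ y ∂(γ.map Prod.snd), legendre φ y ≠ ⊤ := by
    rw [h2]
    refine (ae_map_iff hT.measurable.aemeasurable ?_).2 (ae_of_all _ fun w => ?_)
    · exact (measurable_legendre φ (measurableSet_singleton ⊤)).compl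
    · simp only [hlegendre, ne_eq, EReal.coe_ne_top, not_false_eq_true]
  have hyoung : ∀ᵐ p ∂γ, p.1 * p.2 ≤ φ p.1 + ψ p.2 :=
    (ae_of_ae_map measurable_snd.aemeasurable hfinite).mono
      fun p hp => mul_le_add_toReal_legendre hφc hp p.1
  have hxy : Integrable (fun p : ℝ × ℝ => p.1 * p.2) γ :=
    ((h1 ▸ hx).comp_of_map measurable_fst.aemeasurable).integrable_mul
      ((h2 ▸ hy).comp_of_map measurable_snd.aemeasurable)
  calc ∫ p, p.1 * p.2 ∂γ ≤ ∫ x, φ x ∂σ + ∫ y, ψ y ∂(σ.map T) := by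
        simpa only [h1, h2] using integral_mul_le_of_ae_le_add (h1 ▸ hφ) (h2 ▸ hψ) hxy hyoung
    _ = ∫ x, φ x ∂σ + ∫ x, (x * T x - φ x) ∂σ := by
        rw [integral_map hT.measurable.aemeasurable hψ.1, ← hψT]; rfl
    _ = ∫ x, x * T x ∂σ := by rw [integral_sub hxT hφ]; ring

theorem stmt_1_general (σ μ : Measure ℝ) [IsProbabilityMeasure σ]
    (hσ2 : Integrable (fun x : ℝ => x ^ 2) σ) (hμ2 : Integrable (fun x : ℝ => x ^ 2) μ)
    (T : ℝ → ℝ) (hT : Monotone T) (hpush : σ.map T = μ) :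
    W2sq σ μ = ∫ x, |x - T x| ^ 2 ∂σ := by
  subst hpush
  have hx : MemLp id 2 σ := (memLp_two_iff_integrable_sq aestronglyMeasurable_id).2 hσ2
  have hy : MemLp id 2 (σ.map T) := (memLp_two_iff_integrable_sq aestronglyMeasurable_id).2 hμ2
  have hgraph : Measurable fun x => (x, T x) := measurable_id.prodMk hT.measurable
  set γ₀ := σ.map fun x => (x, T x)
  have hγ₀fst : γ₀.map Prod.fst = σ := by
    rw [Measure.map_map measurable_fst hgraph]; exact Measure.map_id
  have hγ₀snd : γ₀.map Prod.snd = σ.map T := Measure.map_map measurable_snd hgraph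
  have hcost₀ : ∫ x, |x - T x| ^ 2 ∂σ = ∫ p, (p.1 - p.2) ^ 2 ∂γ₀ := by
    rw [integral_map hgraph.aemeasurable (by fun_prop)]; simp only [sq_abs]
  have hxy₀ : ∫ p, p.1 * p.2 ∂γ₀ = ∫ x, x * T x ∂σ := integral_map hgraph.aemeasurable (by fun_prop)
  refine IsLeast.csInf_eq ⟨⟨γ₀, hγ₀fst, hγ₀snd, hcost₀⟩, ?_⟩
  rintro _ ⟨γ, h1, h2, rfl⟩
  rw [hcost₀, integral_sub_sq_of_map_eq hγ₀fst hγ₀snd hx hy, integral_sub_sq_of_map_eq h1 h2 hx hy,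
    hxy₀]
  linarith [hT.integral_fst_mul_snd_le hx hy h1 h2]

/-- A nondecreasing map pushing an atomless measure σ forward to μ is an optimal transport
map for the quadratic cost. -/
theorem stmt_1 (σ μ : Measure ℝ) [IsProbabilityMeasure σ] [IsProbabilityMeasure μ]
    [NullSingletonClass σ]
    (hσ2 : Integrable (fun x : ℝ => x ^ 2) σ) (hμ2 : Integrable (fun x : ℝ => x ^ 2) μ)
    (T : ℝ → ℝ) (hT : Monotone T) (hpush : σ.map T = μ) :
    W2sq σ μ = ∫ x, |x - T x| ^ 2 ∂σ :=
  stmt_1_general σ μ hσ2 hμ2 T hT hpush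
end

section
/- Let φ_h: ℝ^n → ℝ^n be continuously differentiable with Lipschitz-continuous Jacobian, let ψ(u) = u − φ_h(u), and suppose u* satisfies ψ(u*) = 0 with Dψ(u*) invertible. Consider the inexact Newton iteration u_{k+1} = u_k + s_k where ‖Dψ(u_k)s_k + ψ(u_k)‖ ≤ η‖ψ(u_k)‖ with 0 ≤ η < 1. Then there exists a neighborhood of u* such that for any initial guess u_0 in this neighborhood, the sequence u_k remains in the neighborhood and ‖ψ(u_{k+1})‖ ≤ η'‖ψ(u_k)‖ for some η' with η ≤ η' < 1; in particular ψ(u_k) → 0 and u_k → u*. -/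
/-!
Near a root `x₀` at which `fderiv ℝ f x₀` is bounded below (antilipschitz with constant `C`),
the derivative stays bounded below with constant `2C` because it is `K`-Lipschitz, and
`f y - f x - fderiv ℝ f x (y - x)` is `O(K ‖y - x‖²)`. Hence an inexact Newton step from `x` has
length at most `4C ‖f x‖`, the new residual is at most `η ‖f x‖ + K ‖y - x‖²`, and the error
satisfies `‖y - x₀‖ ≤ 2C ‖f y‖`. Taking `δ` with `CKδ ≤ 1/4` and then `ε` small enough, the set
`{x | ‖x - x₀‖ < δ ∧ ‖f x‖ < ε}` is invariant and the residuals contract by `η' = (1 + η)/2`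
on it; the errors go to zero with the residuals.
-/

open Filter Topology NNReal

theorem tendsto_nhds_zero_of_norm_succ_le_mul {F : Type*} [SeminormedAddCommGroup F]
    {v : ℕ → F} {q : ℝ} (hq0 : 0 ≤ q) (hq1 : q < 1) (h : ∀ k, ‖v (k + 1)‖ ≤ q * ‖v k‖) :
    Tendsto v atTop (𝓝 0) :=
  squeeze_zero_norm (fun k => le_geom (u := fun k => ‖v k‖) hq0 k fun i _ => h i) <| by
    simpa using (tendsto_pow_atTop_nhds_zero_of_lt_one hq0 hq1).mul_const ‖v 0‖

section InexactNewton

variable {E F : Type*} [NormedAddCommGroup E] [NormedSpace ℝ E]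
  [NormedAddCommGroup F] [NormedSpace ℝ F] {f : E → F} {K C : ℝ≥0}

theorem ContinuousLinearMap.antilipschitzWith_two_mul_of_norm_sub_le {T S : E →L[ℝ] F}
    (hT : AntilipschitzWith C T) (hST : C * ‖S - T‖ ≤ 1 / 2) : AntilipschitzWith (2 * C) S := by
  refine S.antilipschitz_of_bound fun v => ?_
  have hTv : ‖T v‖ ≤ ‖S v‖ + ‖S - T‖ * ‖v‖ :=
    calc ‖T v‖ = ‖S v - (S - T) v‖ := by simp
      _ ≤ ‖S v‖ + ‖(S - T) v‖ := norm_sub_le _ _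
      _ ≤ ‖S v‖ + ‖S - T‖ * ‖v‖ := by gcongr; exact (S - T).le_opNorm v
  push_cast
  nlinarith [T.bound_of_antilipschitz hT v, mul_le_mul_of_nonneg_left hTv C.coe_nonneg,
    mul_le_mul_of_nonneg_right hST (norm_nonneg v)]

theorem norm_sub_sub_fderiv_le_of_lipschitzWith (hf : Differentiable ℝ f)
    (hf' : LipschitzWith K (fderiv ℝ f)) (x y : E) :
    ‖f y - f x - fderiv ℝ f x (y - x)‖ ≤ K * ‖y - x‖ ^ 2 := by
  have hbound : ∀ z ∈ Metric.closedBall x ‖y - x‖,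
      ‖fderiv ℝ f z - fderiv ℝ f x‖ ≤ K * ‖y - x‖ := fun z hz => by
    rw [← dist_eq_norm]
    exact (hf'.dist_le_mul z x).trans (by gcongr; exact hz)
  calc ‖f y - f x - fderiv ℝ f x (y - x)‖ ≤ K * ‖y - x‖ * ‖y - x‖ :=
        (convex_closedBall x _).norm_image_sub_le_of_norm_fderiv_le' (fun z _ => hf z) hbound
          (Metric.mem_closedBall_self (norm_nonneg _)) (by simp [dist_eq_norm])
    _ = K * ‖y - x‖ ^ 2 := by ring

theorem norm_le_norm_linearization_add (hf : Differentiable ℝ f)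
    (hf' : LipschitzWith K (fderiv ℝ f)) (x y : E) :
    ‖f y‖ ≤ ‖fderiv ℝ f x (y - x) + f x‖ + K * ‖y - x‖ ^ 2 :=
  calc ‖f y‖ = ‖(fderiv ℝ f x (y - x) + f x) + (f y - f x - fderiv ℝ f x (y - x))‖ := by
        congr 1; abel
    _ ≤ _ := (norm_add_le _ _).trans
        (by gcongr; exact norm_sub_sub_fderiv_le_of_lipschitzWith hf hf' x y)

variable {x₀ : E}

theorem antilipschitzWith_two_mul_fderiv (hf' : LipschitzWith K (fderiv ℝ f))
    (hA : AntilipschitzWith C (fderiv ℝ f x₀)) {x : E} (hx : C * K * ‖x - x₀‖ ≤ 1 / 2) :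
    AntilipschitzWith (2 * C) (fderiv ℝ f x) := by
  refine ContinuousLinearMap.antilipschitzWith_two_mul_of_norm_sub_le hA ?_
  calc (C : ℝ) * ‖fderiv ℝ f x - fderiv ℝ f x₀‖ ≤ C * (K * ‖x - x₀‖) := by
        gcongr; rw [← dist_eq_norm, ← dist_eq_norm]; exact hf'.dist_le_mul x x₀
    _ ≤ 1 / 2 := by rw [← mul_assoc]; exact hx

theorem norm_sub_le_two_mul_norm_of_antilipschitzWith (hf : Differentiable ℝ f)
    (hf' : LipschitzWith K (fderiv ℝ f)) (hroot : f x₀ = 0)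
    (hA : AntilipschitzWith C (fderiv ℝ f x₀)) {w : E} (hw : C * K * ‖w - x₀‖ ≤ 1 / 2) :
    ‖w - x₀‖ ≤ 2 * C * ‖f w‖ := by
  have htaylor := norm_sub_sub_fderiv_le_of_lipschitzWith hf hf' x₀ w
  rw [hroot, sub_zero] at htaylor
  have hlin : ‖fderiv ℝ f x₀ (w - x₀)‖ ≤ ‖f w‖ + K * ‖w - x₀‖ ^ 2 := by
    have := norm_sub_le (f w) (f w - fderiv ℝ f x₀ (w - x₀))
    rw [sub_sub_cancel] at this
    linarith
  nlinarith [(fderiv ℝ f x₀).bound_of_antilipschitz hA (w - x₀),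
    mul_le_mul_of_nonneg_left hlin C.coe_nonneg,
    mul_le_mul_of_nonneg_right hw (norm_nonneg (w - x₀))]

theorem norm_sub_le_of_inexact_newton_step {η : ℝ} {x y : E} (hη : η ≤ 1)
    (hA : AntilipschitzWith C (fderiv ℝ f x))
    (hstep : ‖fderiv ℝ f x (y - x) + f x‖ ≤ η * ‖f x‖) : ‖y - x‖ ≤ 2 * C * ‖f x‖ := by
  have hlin : ‖fderiv ℝ f x (y - x)‖ ≤ 2 * ‖f x‖ := by
    have := norm_sub_le (fderiv ℝ f x (y - x) + f x) (f x)
    rw [add_sub_cancel_right] at this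
    nlinarith [norm_nonneg (f x)]
  nlinarith [(fderiv ℝ f x).bound_of_antilipschitz hA (y - x),
    mul_le_mul_of_nonneg_left hlin C.coe_nonneg]

theorem inexact_newton_step {η ρ δ ε : ℝ} {x y : E} (hf : Differentiable ℝ f)
    (hf' : LipschitzWith K (fderiv ℝ f)) (hroot : f x₀ = 0)
    (hA : AntilipschitzWith C (fderiv ℝ f x₀)) (hη : η ≤ 1) (hδ : 4 * (C * K * δ) ≤ 1)
    (hεδ : 4 * C * ε ≤ δ) (hερ : 16 * C ^ 2 * K * ε ≤ ρ) (hx : ‖x - x₀‖ < δ) (hfx : ‖f x‖ < ε)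
    (hstep : ‖fderiv ℝ f x (y - x) + f x‖ ≤ η * ‖f x‖) :
    ‖f y‖ ≤ (η + ρ) * ‖f x‖ ∧ ‖y - x₀‖ ≤ 2 * C * ‖f y‖ := by
  have hCK : 0 ≤ (C : ℝ) * K := by positivity
  have hε : 0 ≤ ε := (norm_nonneg _).trans hfx.le
  have hFx := antilipschitzWith_two_mul_fderiv hf' hA (x := x) <|
    calc (C : ℝ) * K * ‖x - x₀‖ ≤ C * K * δ := by gcongr
      _ ≤ 1 / 2 := by linarith
  have hs : ‖y - x‖ ≤ 4 * C * ‖f x‖ := by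
    have := norm_sub_le_of_inexact_newton_step hη hFx hstep
    push_cast at this; linarith
  have hsε : ‖y - x‖ ≤ 4 * C * ε := hs.trans (by gcongr)
  refine ⟨?_, norm_sub_le_two_mul_norm_of_antilipschitzWith hf hf' hroot hA ?_⟩
  · have hquad : (K : ℝ) * ‖y - x‖ ^ 2 ≤ ρ * ‖f x‖ :=
      calc (K : ℝ) * ‖y - x‖ ^ 2 ≤ K * (4 * C * ε) * (4 * C * ‖f x‖) := by
            rw [sq, ← mul_assoc]; gcongr
        _ = 16 * C ^ 2 * K * ε * ‖f x‖ := by ring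
        _ ≤ ρ * ‖f x‖ := by gcongr
    linarith [norm_le_norm_linearization_add hf hf' x y]
  · have hy : ‖y - x₀‖ ≤ 2 * δ :=
      calc ‖y - x₀‖ = ‖(y - x) + (x - x₀)‖ := by rw [sub_add_sub_cancel]
        _ ≤ ‖y - x‖ + ‖x - x₀‖ := norm_add_le _ _
        _ ≤ 2 * δ := by linarith
    calc (C : ℝ) * K * ‖y - x₀‖ ≤ C * K * (2 * δ) := by gcongr
      _ ≤ 1 / 2 := by linarith

theorem exists_nhds_inexact_newton_linear_convergence (hf : Differentiable ℝ f)
    (hf' : LipschitzWith K (fderiv ℝ f)) (hroot : f x₀ = 0)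
    (hA : AntilipschitzWith C (fderiv ℝ f x₀)) {η : ℝ} (hη0 : 0 ≤ η) (hη1 : η < 1) :
    ∃ V ∈ 𝓝 x₀, ∃ η' : ℝ, η ≤ η' ∧ η' < 1 ∧
      ∀ u : ℕ → E, u 0 ∈ V →
        (∀ k, ‖fderiv ℝ f (u k) (u (k + 1) - u k) + f (u k)‖ ≤ η * ‖f (u k)‖) →
        (∀ k, u k ∈ V) ∧ (∀ k, ‖f (u (k + 1))‖ ≤ η' * ‖f (u k)‖) ∧
        Tendsto (fun k => f (u k)) atTop (𝓝 0) ∧ Tendsto u atTop (𝓝 x₀) := by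
  set ρ := (1 - η) / 2 with hρ
  obtain ⟨δ, hδ, hCKδ⟩ := exists_pos_mul_lt (by norm_num : (0 : ℝ) < 1 / 4) (C * K)
  obtain ⟨ε, hε, hCKε⟩ := exists_pos_mul_lt (lt_min hδ (by linarith : 0 < ρ))
    (4 * C + 16 * C ^ 2 * K : ℝ)
  rw [add_mul] at hCKε
  have hεδ : 4 * C * ε ≤ δ := by
    linarith [min_le_left δ ρ, (by positivity : (0 : ℝ) ≤ 16 * C ^ 2 * K * ε)]
  have hερ : 16 * C ^ 2 * K * ε ≤ ρ := by
    linarith [min_le_right δ ρ, (by positivity : (0 : ℝ) ≤ 4 * C * ε)]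
  let V := {x : E | ‖x - x₀‖ < δ ∧ ‖f x‖ < ε}
  have hV : V ∈ 𝓝 x₀ := by
    refine IsOpen.mem_nhds ?_ (by simpa [V, hroot] using ⟨hδ, hε⟩)
    exact (isOpen_lt (continuous_id.sub continuous_const).norm continuous_const).inter
      (isOpen_lt (hf.continuous.norm) continuous_const)
  refine ⟨V, hV, η + ρ, by linarith, by linarith, fun u hu0 hstep => ?_⟩
  have hnext : ∀ k, u k ∈ V → u (k + 1) ∈ V ∧ ‖f (u (k + 1))‖ ≤ (η + ρ) * ‖f (u k)‖ := by
    rintro k ⟨hx, hfx⟩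
    obtain ⟨hres, herr⟩ :=
      inexact_newton_step hf hf' hroot hA hη1.le (by linarith) hεδ hερ hx hfx (hstep k)
    have hfy : ‖f (u (k + 1))‖ < ε :=
      hres.trans_lt ((mul_le_of_le_one_left (norm_nonneg _) (by linarith)).trans_lt hfx)
    have hy : ‖u (k + 1) - x₀‖ < δ :=
      calc ‖u (k + 1) - x₀‖ ≤ 2 * C * ‖f (u (k + 1))‖ := herr
        _ ≤ 2 * C * ε := by gcongr
        _ < δ := by linarith
    exact ⟨⟨hy, hfy⟩, hres⟩
  have hmem : ∀ k, u k ∈ V := fun k => Nat.rec hu0 (fun k hk => (hnext k hk).1) k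
  have hres : ∀ k, ‖f (u (k + 1))‖ ≤ (η + ρ) * ‖f (u k)‖ := fun k => (hnext k (hmem k)).2
  have hresid : Tendsto (fun k => f (u k)) atTop (𝓝 0) :=
    tendsto_nhds_zero_of_norm_succ_le_mul (by linarith) (by linarith) hres
  have herr : ∀ k, ‖u k - x₀‖ ≤ 2 * C * ‖f (u k)‖ := fun k =>
    norm_sub_le_two_mul_norm_of_antilipschitzWith hf hf' hroot hA <|
      calc (C : ℝ) * K * ‖u k - x₀‖ ≤ C * K * δ := by gcongr; exact (hmem k).1.le
        _ ≤ 1 / 2 := by linarith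
  refine ⟨hmem, hres, hresid, tendsto_iff_norm_sub_tendsto_zero.2 ?_⟩
  exact squeeze_zero (fun k => norm_nonneg _) herr
    (by simpa using hresid.norm.const_mul (2 * C : ℝ))

end InexactNewton

/-- Local linear convergence of the inexact Newton (Newton–Krylov) iteration for the
timestepper residual `ψ(u) = u − φₕ(u)` with fixed forcing tolerance `η < 1`. -/
theorem stmt_18 (n : ℕ) (φh : EuclideanSpace ℝ (Fin n) → EuclideanSpace ℝ (Fin n))
    (hφ : ContDiff ℝ 1 φh) (K : NNReal)
    (hLip : LipschitzWith K fun u => fderiv ℝ φh u)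
    (ustar : EuclideanSpace ℝ (Fin n)) (hroot : ustar - φh ustar = 0)
    (hinv : ∃ A : EuclideanSpace ℝ (Fin n) ≃L[ℝ] EuclideanSpace ℝ (Fin n),
      (A : EuclideanSpace ℝ (Fin n) →L[ℝ] EuclideanSpace ℝ (Fin n))
        = fderiv ℝ (fun w => w - φh w) ustar)
    (η : ℝ) (hη0 : 0 ≤ η) (hη1 : η < 1) :
    ∃ V ∈ nhds ustar, ∃ η' : ℝ, η ≤ η' ∧ η' < 1 ∧
      ∀ u : ℕ → EuclideanSpace ℝ (Fin n), u 0 ∈ V →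
        (∀ k, ‖fderiv ℝ (fun w => w - φh w) (u k) (u (k + 1) - u k)
            + (u k - φh (u k))‖ ≤ η * ‖u k - φh (u k)‖) →
        (∀ k, u k ∈ V) ∧
        (∀ k, ‖u (k + 1) - φh (u (k + 1))‖ ≤ η' * ‖u k - φh (u k)‖) ∧
        Tendsto (fun k => u k - φh (u k)) atTop (nhds 0) ∧
        Tendsto u atTop (nhds ustar) := by
  obtain ⟨A, hA⟩ := hinv
  have hφd : Differentiable ℝ φh := hφ.differentiable one_ne_zero
  have hψ : Differentiable ℝ fun w => w - φh w := differentiable_id.sub hφd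
  have hψ' : LipschitzWith K (fderiv ℝ fun w => w - φh w) := by
    have hderiv : (fderiv ℝ fun w => w - φh w) =
        fun w => ContinuousLinearMap.id ℝ _ - fderiv ℝ φh w :=
      funext fun w => ((hasFDerivAt_id w).sub (hφd w).hasFDerivAt).fderiv
    simpa [hderiv] using (LipschitzWith.const (ContinuousLinearMap.id ℝ _)).sub hLip
  obtain ⟨C, hA'⟩ : ∃ C, AntilipschitzWith C (fderiv ℝ (fun w => w - φh w) ustar) :=
    ⟨_, by rw [← hA]; exact A.antilipschitz⟩
  exact exists_nhds_inexact_newton_linear_convergence hψ hψ' hroot hA' hη0 hη1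
end
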